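/- arXiv:math/0305077 — 6 statements merged into one kernel-verified Lean document; each statement's English description precedes it below -/
import Mathlib

section
/- Let z_A, z_B, z_C, z_D be complex numbers, each different from 0 and from 1. Then the full system of compatibility and completeness equations of LR^3, namely {(C1) z_A(1-1/z_A)^2 z_D^2 z_C^2 z_B^2 · 1/(1-z_B) = 1, (C2) (1/(1-z_A))^2 · 1/(1-z_D) · (1-1/z_B)^2 · 1/(1-z_C) = 1, (C3) (1-1/z_D)^2 · 1/(1-z_C) · z_A = 1, (C4) (1-1/z_C)^2 · 1/(1-z_D) · 1/(1-z_B) = 1, (M) z_D z_C z_B (1-z_A) = 1}, holds if and only if the reduced system {(M') z_D z_C (1-z_A)^2 / z_A = -1, (C1') z_A = 1/(1-z_B), (C3') ((z_D-1)/z_D)^2 · z_A/(1-z_C) = 1, (C4') ((z_C-1)/z_C)^2 · z_A/(1-z_D) = 1} holds. -/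
/-- The full system of compatibility and completeness equations of `LR^3` is
equivalent to the reduced system. -/
theorem stmt_2 (zA zB zC zD : ℂ)
    (hA0 : zA ≠ 0) (hA1 : zA ≠ 1) (hB0 : zB ≠ 0) (hB1 : zB ≠ 1)
    (hC0 : zC ≠ 0) (hC1 : zC ≠ 1) (hD0 : zD ≠ 0) (hD1 : zD ≠ 1) :
    (zA * (1 - 1/zA)^2 * zD^2 * zC^2 * zB^2 * (1/(1 - zB)) = 1 ∧
     (1/(1 - zA))^2 * (1/(1 - zD)) * (1 - 1/zB)^2 * (1/(1 - zC)) = 1 ∧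
     (1 - 1/zD)^2 * (1/(1 - zC)) * zA = 1 ∧
     (1 - 1/zC)^2 * (1/(1 - zD)) * (1/(1 - zB)) = 1 ∧
     zD * zC * zB * (1 - zA) = 1) ↔
    (zD * zC * (1 - zA)^2 / zA = -1 ∧
     zA = 1/(1 - zB) ∧
     ((zD - 1)/zD)^2 * (zA/(1 - zC)) = 1 ∧
     ((zC - 1)/zC)^2 * (zA/(1 - zD)) = 1) := by
  have na : (1:ℂ) - zA ≠ 0 := sub_ne_zero.mpr (Ne.symm hA1)
  have nb : (1:ℂ) - zB ≠ 0 := sub_ne_zero.mpr (Ne.symm hB1)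
  have nc : (1:ℂ) - zC ≠ 0 := sub_ne_zero.mpr (Ne.symm hC1)
  have nd : (1:ℂ) - zD ≠ 0 := sub_ne_zero.mpr (Ne.symm hD1)
  have nc1 : zC - 1 ≠ 0 := sub_ne_zero.mpr hC1
  have nd1 : zD - 1 ≠ 0 := sub_ne_zero.mpr hD1
  have den : (1 - zA)^2 * (1 - zD) * zB^2 * (1 - zC) ≠ 0 :=
    mul_ne_zero (mul_ne_zero (mul_ne_zero (pow_ne_zero 2 na) nd) (pow_ne_zero 2 hB0)) nc
  have h2eq : (1/(1 - zA))^2 * (1/(1 - zD)) * (1 - 1/zB)^2 * (1/(1 - zC))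
      = (zB - 1)^2 / ((1 - zA)^2 * (1 - zD) * zB^2 * (1 - zC)) := by
    field_simp
  constructor
  · rintro ⟨h1, h2, h3, h4, h5⟩
    field_simp at h1 h3 h4
    have key : zA * (1 - zB) = 1 := by
      apply mul_left_cancel₀ hA0
      linear_combination -zA * h1 + zA * (zD*zC*zB*(1-zA)+1) * h5
    refine ⟨?_, ?_, ?_, ?_⟩ <;> field_simp
    · apply mul_left_cancel₀ hB0
      linear_combination (1-zA) * h5 - key
    · linear_combination key
    · linear_combination h3
    · linear_combination zA * h4 + zC^2*(1-zD) * key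
  · rintro ⟨g1, g2, g3, g4⟩
    field_simp at g1 g2 g3 g4
    have k5 : zD * zC * zB * (1 - zA) = 1 := by
      apply mul_left_cancel₀ hA0
      linear_combination -g1 - zD*zC*(1-zA) * g2
    have sq1 : zD^2 * zC^2 * (1 - zA)^4 = zA^2 := by
      linear_combination (zD*zC*(1-zA)^2 - zA) * g1
    have hcd : (zC - 1) * (zD - 1) * zA^2 = zD^2 * zC^2 := by
      apply mul_left_cancel₀ (mul_ne_zero nc1 nd1)
      linear_combination ((zC-1)^2*zA) * g3 + (zD^2*(1-zC)) * g4
    have h2' : (zB - 1)^2 = (1 - zA)^2 * (1 - zD) * zB^2 * (1 - zC) := by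
      apply mul_left_cancel₀ (pow_ne_zero 4 hA0)
      linear_combination
        (zA^2*(2 + (zA*(1-zB)-1) + (1-zA)^2*((1-zD)*(1-zC))*(2*(zA-1) - (zA*(1-zB)-1)))) * g2
        - sq1 - (1-zA)^4 * hcd
    refine ⟨?_, ?_, ?_, ?_, k5⟩
    · field_simp
      linear_combination (zD*zC*zB*(1-zA)+1) * k5 - g2
    · rw [h2eq, div_eq_one_iff_eq den]
      exact h2'
    · field_simp
      linear_combination g3
    · field_simp
      apply mul_left_cancel₀ hA0
      linear_combination g4 - zC^2*(1-zD) * g2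
end

section
/- Let w be a complex number with w^4 + 2w^3 - w^2 - 3w + 2 = 0, and set z_C = z_D = w, z_A = w^2/(1-w), and z_B = (w^2 + w - 1)/w^2. Then z_A, z_B, z_C, z_D are all different from 0 and from 1, and they satisfy the reduced system of compatibility and completeness equations of LR^3: (M') z_D z_C (1-z_A)^2 / z_A = -1, (C1') z_A = 1/(1-z_B), (C3') ((z_D-1)/z_D)^2 · z_A/(1-z_C) = 1, and (C4') ((z_C-1)/z_C)^2 · z_A/(1-z_D) = 1. -/
/-- Any root `w` of `w^4 + 2w^3 - w^2 - 3w + 2` gives, via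
`z_C = z_D = w`, `z_A = w^2/(1-w)`, `z_B = (w^2+w-1)/w^2`, a solution of the
reduced system of compatibility and completeness equations of `LR^3`. -/
theorem stmt_3 (w : ℂ) (hw : w^4 + 2*w^3 - w^2 - 3*w + 2 = 0)
    (zA zB zC zD : ℂ)
    (hzC : zC = w) (hzD : zD = w)
    (hzA : zA = w^2/(1 - w)) (hzB : zB = (w^2 + w - 1)/w^2) :
    (zA ≠ 0 ∧ zA ≠ 1 ∧ zB ≠ 0 ∧ zB ≠ 1 ∧ zC ≠ 0 ∧ zC ≠ 1 ∧ zD ≠ 0 ∧ zD ≠ 1) ∧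
    zD * zC * (1 - zA)^2 / zA = -1 ∧
    zA = 1/(1 - zB) ∧
    ((zD - 1)/zD)^2 * (zA/(1 - zC)) = 1 ∧
    ((zC - 1)/zC)^2 * (zA/(1 - zD)) = 1 := by
  have hw0 : w ≠ 0 := by
    intro h; rw [h] at hw; norm_num at hw
  have hw1 : w ≠ 1 := by
    intro h; rw [h] at hw; norm_num at hw
  have h1w : (1 : ℂ) - w ≠ 0 := by
    intro h; apply hw1; linear_combination -h
  have hq : w^2 + w - 1 ≠ 0 := by
    intro h
    apply h1w
    linear_combination hw - (w^2 + w - 1) * h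
  rw [hzA, hzB, hzC, hzD]
  refine ⟨⟨?_, ?_, ?_, ?_, hw0, hw1, hw0, hw1⟩, ?_, ?_, ?_, ?_⟩
  · exact div_ne_zero (pow_ne_zero 2 hw0) h1w
  · intro h
    apply hq
    field_simp at h
    linear_combination h
  · exact div_ne_zero hq (pow_ne_zero 2 hw0)
  · intro h
    apply hw1
    field_simp at h
    linear_combination h
  · field_simp
    linear_combination hw
  · rw [eq_div_iff (by intro h; apply hw1; field_simp at h; linear_combination -h)]
    field_simp
    ring
  · field_simp
    ring
  · field_simp
    ring
end

section
/- Let z_A, z_B, z_C, z_D be complex numbers, each different from 0 and from 1, satisfying the reduced system of compatibility and completeness equations of LR^3: (M') z_D z_C (1-z_A)^2 / z_A = -1, (C1') z_A = 1/(1-z_B), (C3') ((z_D-1)/z_D)^2 · z_A/(1-z_C) = 1, and (C4') ((z_C-1)/z_C)^2 · z_A/(1-z_D) = 1. Then z_C = z_D, z_A = z_C^2/(1-z_C), z_B = (z_C^2 + z_C - 1)/z_C^2, and z_C^4 + 2 z_C^3 - z_C^2 - 3 z_C + 2 = 0. -/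
/-- Any solution of the reduced system of compatibility and completeness
equations of `LR^3` satisfies `z_C = z_D`, `z_A = z_C^2/(1-z_C)`,
`z_B = (z_C^2+z_C-1)/z_C^2`, and `z_C` is a root of `w^4+2w^3-w^2-3w+2`. -/
theorem stmt_4 (zA zB zC zD : ℂ)
    (hA0 : zA ≠ 0) (hA1 : zA ≠ 1) (hB0 : zB ≠ 0) (hB1 : zB ≠ 1)
    (hC0 : zC ≠ 0) (hC1 : zC ≠ 1) (hD0 : zD ≠ 0) (hD1 : zD ≠ 1)
    (hM : zD * zC * (1 - zA)^2 / zA = -1)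
    (hC1' : zA = 1/(1 - zB))
    (hC3' : ((zD - 1)/zD)^2 * (zA/(1 - zC)) = 1)
    (hC4' : ((zC - 1)/zC)^2 * (zA/(1 - zD)) = 1) :
    zC = zD ∧ zA = zC^2/(1 - zC) ∧ zB = (zC^2 + zC - 1)/zC^2 ∧
    zC^4 + 2*zC^3 - zC^2 - 3*zC + 2 = 0 := by
  have hc1 : (1:ℂ) - zC ≠ 0 := sub_ne_zero.mpr (Ne.symm hC1)
  have hd1 : (1:ℂ) - zD ≠ 0 := sub_ne_zero.mpr (Ne.symm hD1)
  have hb1 : (1:ℂ) - zB ≠ 0 := sub_ne_zero.mpr (Ne.symm hB1)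
  -- polynomial forms of the four equations
  have e1 : zD * zC * (1 - zA)^2 = -zA := by
    field_simp at hM; linear_combination hM
  have e2 : zA * (zD - 1)^2 = zD^2 * (1 - zC) := by
    field_simp at hC3'; linear_combination hC3'
  have e3 : zA * (zC - 1)^2 = zC^2 * (1 - zD) := by
    field_simp at hC4'; linear_combination hC4'
  have hb : zA * (1 - zB) = 1 := by
    rw [hC1']; field_simp
  -- key factorization coming from (C3') - (C4')
  have key : (zD - zC) * (zA*(zC+zD-2) - (zC+zD) + zC*zD) = 0 := by
    linear_combination e2 - e3
  have hcd : zC = zD := by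
    rcases mul_eq_zero.mp key with h | hQ
    · exact (sub_eq_zero.mp h).symm
    · exfalso
      -- with s = zC+zD and p = zC*zD we get s = 3p - p^2
      have hs : 2*(zC+zD) + 2*(zC*zD)^2 - 6*(zC*zD) = 0 := by
        linear_combination (zC+zD-2)*e2 + (zC+zD-2)*e3
          - ((zC+zD)^2 - 2*(zC*zD) - 2*(zC+zD) + 2)*hQ
      -- and then p^2 (p-2)^2 = 0
      have hp : (zC*zD)^2 * (zC*zD - 2)^2 = 0 := by
        linear_combination (zC+zD-2)^2 * e1
          - ((zC*zD)*(zA*(zC+zD-2) - (zC+zD) + zC*zD)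
              - 2*(zC*zD)*(zC*zD-2) + (zC+zD-2)) * hQ
          - (1/2) * (5*(zC*zD) - 2*(zC*zD)^2 - 2
              + ((zC+zD) + (zC*zD)^2 - 3*(zC*zD))) * hs
      have hp2 : zC * zD = 2 := by
        rcases mul_eq_zero.mp hp with h | h
        · exact absurd (pow_eq_zero_iff (n := 2) (by norm_num) |>.mp h)
            (mul_ne_zero hC0 hD0)
        · exact sub_eq_zero.mp (pow_eq_zero_iff (n := 2) (by norm_num) |>.mp h)
      have hs2 : zC + zD = 2 := by
        have h4 : (2:ℂ) * (zC + zD) - 4 = 0 := by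
          linear_combination hs + (2 - 2*(zC*zD)) * hp2
        linear_combination h4 / 2
      -- zA * (zD - 1) = zD^2
      have ha : zA * (zD - 1) = zD^2 := by
        have h : (zD - 1) * (zA * (zD - 1) - zD^2) = 0 := by
          linear_combination e2 - zD^2 * hs2
        rcases mul_eq_zero.mp h with h' | h'
        · exact absurd (by linear_combination h' : zD = 1) hD1
        · linear_combination h'
      -- zD^2 = 2 zD - 2
      have hd : zD^2 - 2*zD + 2 = 0 := by
        linear_combination zD*hs2 - hp2
      -- hence zA = 2, contradicting (M')
      have ha2 : zA = 2 := by
        have h : (zD - 1) * (zA - 2) = 0 := by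
          linear_combination ha + hd
        rcases mul_eq_zero.mp h with h' | h'
        · exact absurd (by linear_combination h' : zD = 1) hD1
        · linear_combination h'
      have : (4:ℂ) = 0 := by
        linear_combination e1 - (1-zA)^2 * hp2 - (2*zA + 1) * ha2
      norm_num at this
  -- now zC = zD
  subst hcd
  have ha : zA * (1 - zC) = zC^2 := by
    have h : (1 - zC) * (zA * (1 - zC) - zC^2) = 0 := by
      linear_combination e3
    rcases mul_eq_zero.mp h with h' | h'
    · exact absurd h' hc1
    · linear_combination h'
  refine ⟨rfl, ?_, ?_, ?_⟩
  · rw [eq_div_iff hc1]; exact ha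
  · rw [eq_div_iff (pow_ne_zero 2 hC0)]
    linear_combination (1 - zB) * ha - (1 - zC) * hb
  · have h : zC^2 * (zC^4 + 2*zC^3 - zC^2 - 3*zC + 2) = 0 := by
      linear_combination (1-zC)^2 * e1
        - (zC^2*(zA*(1-zC) - zC^2) - 2*zC^2*(1 - zC - zC^2) + (1 - zC)) * ha
    rcases mul_eq_zero.mp h with h' | h'
    · exact absurd (pow_eq_zero_iff (n := 2) (by norm_num) |>.mp h') hC0
    · exact h'
end

section
/- There exists a complex number w with w^4 + 2w^3 - w^2 - 3w + 2 = 0 such that w ≠ 0, w ≠ 1, the imaginary part of w is positive, the imaginary part of w^2/(1-w) is positive, and the imaginary part of (w^2 + w - 1)/w^2 is positive. (Equivalently, the compatibility and completeness equations of LR^3 admit a solution in which all four moduli z_C = z_D = w, z_A = w^2/(1-w), z_B = (w^2+w-1)/w^2 have positive imaginary part.) -/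
/-- The compatibility and completeness equations of `LR^3` admit a solution in
which all four moduli `z_C = z_D = w`, `z_A = w^2/(1-w)`, `z_B = (w^2+w-1)/w^2`
have positive imaginary part. -/
theorem stmt_7 :
    ∃ w : ℂ, w^4 + 2*w^3 - w^2 - 3*w + 2 = 0 ∧ w ≠ 0 ∧ w ≠ 1 ∧
      0 < w.im ∧ 0 < (w^2/(1 - w)).im ∧ 0 < ((w^2 + w - 1)/w^2).im := by
  -- find the real part x as a root of the resultant sextic
  obtain ⟨x, hx, hgx⟩ :
      ∃ x ∈ Set.Icc (0.72:ℝ) 0.73,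
        64*x^6+192*x^5+160*x^4-84*x^2-52*x-11 = 0 := by
    have hcont : ContinuousOn (fun x : ℝ => 64*x^6+192*x^5+160*x^4-84*x^2-52*x-11)
        (Set.Icc (0.72:ℝ) 0.73) := by fun_prop
    have h := intermediate_value_Icc (by norm_num : (0.72:ℝ) ≤ 0.73) hcont
    have h0 : (0:ℝ) ∈ Set.Icc (64*(0.72:ℝ)^6+192*0.72^5+160*0.72^4-84*0.72^2-52*0.72-11)
        (64*(0.73:ℝ)^6+192*0.73^5+160*0.73^4-84*0.73^2-52*0.73-11) := by
      constructor <;> norm_num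
    obtain ⟨x, hx, hfx⟩ := h h0
    exact ⟨x, hx, hfx⟩
  obtain ⟨hx1, hx2⟩ := hx
  have hx1 : (0.72:ℝ) ≤ x := hx1
  have hx2 : x ≤ (0.73:ℝ) := hx2
  have hN : (0:ℝ) < 4*x^3+6*x^2-2*x-3 := by nlinarith
  have hD : (0:ℝ) < 4*x+2 := by linarith
  set y : ℝ := Real.sqrt ((4*x^3+6*x^2-2*x-3)/(4*x+2)) with hy_def
  have hy : 0 < y := Real.sqrt_pos.2 (div_pos hN hD)
  have hy2 : y^2 = (4*x^3+6*x^2-2*x-3)/(4*x+2) :=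
    Real.sq_sqrt (le_of_lt (div_pos hN hD))
  have hy2' : y^2 * (4*x+2) = 4*x^3+6*x^2-2*x-3 := by
    rw [hy2]; field_simp
  -- the key inequality
  have hkey : 0 < 2*x - x^2 - y^2 := by nlinarith [hy2', hD]
  have h_im : 4*x^3 - 4*x*y^2 + 6*x^2 - 2*y^2 - 2*x - 3 = 0 := by
    linear_combination -hy2'
  have h_re : (x^4+2*x^3-x^2-3*x+2) + (-6*x^2-6*x+1)*y^2 + y^4 = 0 := by
    have h : ((x^4+2*x^3-x^2-3*x+2) + (-6*x^2-6*x+1)*y^2 + y^4) * (4*x+2)^2 = 0 := by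
      linear_combination ((-6*x^2-6*x+1)*(4*x+2) + y^2*(4*x+2) + (4*x^3+6*x^2-2*x-3)) * hy2'
        - hgx
    have hD2 : ((4*x+2):ℝ)^2 ≠ 0 := pow_ne_zero _ (ne_of_gt hD)
    exact (mul_eq_zero.1 h).resolve_right hD2
  refine ⟨⟨x, y⟩, ?_, ?_, ?_, ?_, ?_, ?_⟩
  · -- polynomial equation
    have hw : (⟨x, y⟩ : ℂ) = (x:ℂ) + (y:ℂ)*Complex.I := by
      apply Complex.ext <;> simp
    rw [hw]
    have hre : ((x:ℂ)^4+2*(x:ℂ)^3-(x:ℂ)^2-3*(x:ℂ)+2) + (-6*(x:ℂ)^2-6*(x:ℂ)+1)*(y:ℂ)^2 + (y:ℂ)^4 = 0 := by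
      exact_mod_cast congrArg (Complex.ofReal) h_re
    have him : 4*(x:ℂ)^3 - 4*(x:ℂ)*(y:ℂ)^2 + 6*(x:ℂ)^2 - 2*(y:ℂ)^2 - 2*(x:ℂ) - 3 = 0 := by
      exact_mod_cast congrArg (Complex.ofReal) h_im
    linear_combination hre + ((y:ℂ)*Complex.I)*him +
      (-(y:ℂ)^2 + 2*(y:ℂ)^3*Complex.I - (y:ℂ)^4 + (y:ℂ)^4*Complex.I^2 +
        6*(x:ℂ)*(y:ℂ)^2 + 4*(x:ℂ)*(y:ℂ)^3*Complex.I + 6*(x:ℂ)^2*(y:ℂ)^2) * Complex.I_sq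
  · intro h
    have : y = 0 := by simpa using congrArg Complex.im h
    exact (ne_of_gt hy) this
  · intro h
    have : y = 0 := by simpa using congrArg Complex.im h
    exact (ne_of_gt hy) this
  · simpa using hy
  · have hns : 0 < Complex.normSq (1 - (⟨x, y⟩ : ℂ)) := by
      simp [Complex.normSq_apply, Complex.sub_re, Complex.sub_im]
      nlinarith [hy]
    rw [Complex.div_im]
    simp only [pow_two, Complex.mul_re, Complex.mul_im, Complex.sub_re, Complex.sub_im,
      Complex.one_re, Complex.one_im]
    rw [div_sub_div_same]
    apply div_pos _ hns
    nlinarith [mul_pos hy hkey]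
  · have hns : 0 < Complex.normSq ((⟨x, y⟩ : ℂ) * ⟨x, y⟩) := by
      simp only [Complex.normSq_apply, Complex.mul_re, Complex.mul_im]
      nlinarith [hy, mul_pos hy hy]
    rw [Complex.div_im]
    simp only [pow_two, Complex.mul_re, Complex.mul_im, Complex.add_re, Complex.add_im,
      Complex.sub_re, Complex.sub_im, Complex.one_re, Complex.one_im]
    rw [div_sub_div_same]
    apply div_pos _ hns
    nlinarith [mul_pos hy hkey]
end

section
/- There exists a complex number w with w^4 + 2w^3 - w^2 - 3w + 2 = 0 such that w ≠ 0, w ≠ 1, the imaginary part of w is negative, while the imaginary part of w^2/(1-w) is positive and the imaginary part of (w^2 + w - 1)/w^2 is positive. (Equivalently, the compatibility and completeness equations of LR^3 admit a mixed solution in which the moduli z_A = w^2/(1-w) and z_B = (w^2+w-1)/w^2 have positive imaginary part but z_C = z_D = w have negative imaginary part.) -/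
open Complex

/-- Auxiliary sign lemma: if `w.re < 0` and `w.im < 0` then the two moduli have
positive imaginary part. -/
lemma aux_signs (w : ℂ) (hx : w.re < 0) (hy : w.im < 0) :
    0 < (w^2/(1 - w)).im ∧ 0 < ((w^2 + w - 1)/w^2).im := by
  have hw0 : w ≠ 0 := fun h => by simp [h] at hy
  have h1w : (1 : ℂ) - w ≠ 0 := by
    intro h
    have : w = 1 := by linear_combination -h
    simp [this] at hy
  have hw2 : w^2 ≠ 0 := pow_ne_zero _ hw0
  have key : 0 < w.im * (2*w.re - w.re^2 - w.im^2) := by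
    have h1 : 2*w.re - w.re^2 - w.im^2 < 0 := by nlinarith [sq_nonneg w.re, sq_nonneg w.im]
    exact mul_pos_of_neg_of_neg hy h1
  have hd1 : 0 < Complex.normSq (1 - w) := Complex.normSq_pos.mpr h1w
  have hd2 : 0 < Complex.normSq (w^2) := Complex.normSq_pos.mpr hw2
  constructor
  · have e1 : (w^2/(1 - w)).im
        = (w.im * (2*w.re - w.re^2 - w.im^2)) / Complex.normSq (1 - w) := by
      rw [Complex.div_im, ← sub_div]
      congr 1
      simp [pow_two, Complex.mul_re, Complex.mul_im, Complex.sub_re, Complex.sub_im]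
      ring
    rw [e1]
    exact div_pos key hd1
  · have e2 : ((w^2 + w - 1)/w^2).im
        = (w.im * (2*w.re - w.re^2 - w.im^2)) / Complex.normSq (w^2) := by
      rw [Complex.div_im, ← sub_div]
      congr 1
      simp [pow_two, Complex.mul_re, Complex.mul_im, Complex.sub_re, Complex.sub_im,
        Complex.add_re, Complex.add_im]
      ring
    rw [e2]
    exact div_pos key hd2

/-- The compatibility and completeness equations of `LR^3` admit a mixed
solution: the moduli `z_A = w^2/(1-w)` and `z_B = (w^2+w-1)/w^2` have positive
imaginary part, but `z_C = z_D = w` have negative imaginary part. -/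
theorem stmt_8 :
    ∃ w : ℂ, w^4 + 2*w^3 - w^2 - 3*w + 2 = 0 ∧ w ≠ 0 ∧ w ≠ 1 ∧
      w.im < 0 ∧ 0 < (w^2/(1 - w)).im ∧ 0 < ((w^2 + w - 1)/w^2).im := by
  -- get a real root t of t^6 - 5 t^4 - 6 t^2 - 1 in [2.4, 2.5]
  have hc : ContinuousOn (fun x : ℝ => x^6 - 5*x^4 - 6*x^2 - 1) (Set.Icc 2.4 2.5) := by
    fun_prop
  have hmem : (0:ℝ) ∈ Set.Icc ((2.4:ℝ)^6 - 5*(2.4:ℝ)^4 - 6*(2.4:ℝ)^2 - 1)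
      ((2.5:ℝ)^6 - 5*(2.5:ℝ)^4 - 6*(2.5:ℝ)^2 - 1) := by
    constructor <;> norm_num
  obtain ⟨t, hts, htf⟩ := intermediate_value_Icc (by norm_num : (2.4:ℝ) ≤ 2.5) hc hmem
  have ht24 : (2.4:ℝ) ≤ t := hts.1
  have ht25 : t ≤ (2.5:ℝ) := hts.2
  have htpos : 0 < t := by linarith
  have ht0 : t ≠ 0 := htpos.ne'
  have ht6 : t^6 = 5*t^4 + 6*t^2 + 1 := by
    have : t^6 - 5*t^4 - 6*t^2 - 1 = 0 := htf
    linarith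
  -- define b
  have hNpos : 0 < (t^3 - 5*t + 2)/t := by
    apply div_pos _ htpos
    nlinarith
  set b : ℝ := Real.sqrt ((t^3 - 5*t + 2)/t) with hbdef
  have hb2 : b^2 = (t^3 - 5*t + 2)/t := Real.sq_sqrt hNpos.le
  have hbpos : 0 < b := Real.sqrt_pos.mpr hNpos
  have hbt : b^2 * t = t^3 - 5*t + 2 := by
    field_simp at hb2
    linarith [hb2]
  -- the candidate root
  set w : ℂ := ⟨-(1+t)/2, -b/2⟩ with hwdef
  have hw : w = (↑(-(1+t)/2) : ℂ) + (↑(-b/2) : ℂ) * Complex.I := Complex.mk_eq_add_mul_I _ _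
  have hre : w.re = -(1+t)/2 := rfl
  have him : w.im = -b/2 := rfl
  have hx : w.re < 0 := by rw [hre]; linarith
  have hy : w.im < 0 := by rw [him]; linarith
  -- cast relations to ℂ
  have hbtC : (b:ℂ)^2 * (t:ℂ) = (t:ℂ)^3 - 5*(t:ℂ) + 2 := by exact_mod_cast congrArg (Complex.ofReal) hbt
  have ht6C : (t:ℂ)^6 = 5*(t:ℂ)^4 + 6*(t:ℂ)^2 + 1 := by exact_mod_cast congrArg (Complex.ofReal) ht6
  have htC0 : (t:ℂ) ≠ 0 := Complex.ofReal_ne_zero.mpr ht0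
  have hI : Complex.I^2 = -1 := Complex.I_sq
  -- w satisfies the quadratic factor
  have h2 : (2:ℂ)*(t:ℂ)*w^2 + 2*(t:ℂ)*(1+(t:ℂ))*w + ((t:ℂ)^3 - 2*(t:ℂ) + 1 + (t:ℂ)^2) = 0 := by
    rw [hw]
    push_cast
    linear_combination ((t:ℂ)*(b:ℂ)^2/2) * hI - (1/2 : ℂ) * hbtC
  -- factorization of (4 t^2) * P(w)
  have h4 : (4:ℂ)*(t:ℂ)^2*(w^4 + 2*w^3 - w^2 - 3*w + 2)
      = (2*(t:ℂ)*w^2 + 2*(t:ℂ)*(1-(t:ℂ))*w + ((t:ℂ)^3 - 2*(t:ℂ) - 1 - (t:ℂ)^2))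
        * (2*(t:ℂ)*w^2 + 2*(t:ℂ)*(1+(t:ℂ))*w + ((t:ℂ)^3 - 2*(t:ℂ) + 1 + (t:ℂ)^2)) := by
    linear_combination (-1 : ℂ) * ht6C
  have hroot : w^4 + 2*w^3 - w^2 - 3*w + 2 = 0 := by
    have h5 : (4:ℂ)*(t:ℂ)^2*(w^4 + 2*w^3 - w^2 - 3*w + 2) = 0 := by
      rw [h4, h2, mul_zero]
    have h6 : (4:ℂ)*(t:ℂ)^2 ≠ 0 := mul_ne_zero (by norm_num) (pow_ne_zero _ htC0)
    exact (mul_eq_zero.mp h5).resolve_left h6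
  have hw0 : w ≠ 0 := by
    intro h
    have h' : w.im = 0 := by rw [h]; simp
    rw [him] at h'; linarith
  have hw1 : w ≠ 1 := by
    intro h
    have h' : w.im = 0 := by rw [h]; simp
    rw [him] at h'; linarith
  obtain ⟨hA, hB⟩ := aux_signs w hx hy
  exact ⟨w, hroot, hw0, hw1, hy, hA, hB⟩
end

section
/- Let z_A, z_B, z_F, z_G be complex numbers, each different from 0 and from 1, satisfying the system of compatibility and completeness equations: (1/(1-z_A)) · (1/z_B) · (z_F/z_G) = 1, z_G z_F = 1, ((1-z_A)^2/z_A) · (z_B^2/(1-z_B)) = 1, and z_B(1-z_A) = 1. Then z_F = z_G = -1, z_A = z_B, and z_A^2 - z_A + 1 = 0; that is, z_A = (1 ± i√3)/2. -/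
open Complex

/-- The unique non-degenerate solution of the compatibility and completeness
equations of the triangulated non-hyperbolic manifold with non-trivial JSJ
decomposition is positive and partially flat: `z_F = z_G = -1`, `z_A = z_B`,
and `z_A^2 - z_A + 1 = 0`, i.e. `z_A = (1 ± i√3)/2`. -/
theorem stmt_9 (zA zB zF zG : ℂ)
    (hA0 : zA ≠ 0) (hA1 : zA ≠ 1) (hB0 : zB ≠ 0) (hB1 : zB ≠ 1)
    (hF0 : zF ≠ 0) (hF1 : zF ≠ 1) (hG0 : zG ≠ 0) (hG1 : zG ≠ 1)
    (h1 : (1/(1 - zA)) * (1/zB) * (zF/zG) = 1)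
    (h2 : zG * zF = 1)
    (h3 : ((1 - zA)^2/zA) * (zB^2/(1 - zB)) = 1)
    (h4 : zB * (1 - zA) = 1) :
    zF = -1 ∧ zG = -1 ∧ zA = zB ∧ zA^2 - zA + 1 = 0 ∧
    (zA = (1 + I * Real.sqrt 3)/2 ∨ zA = (1 - I * Real.sqrt 3)/2) := by
  have hA1' : (1 : ℂ) - zA ≠ 0 := sub_ne_zero.mpr (fun h => hA1 h.symm)
  have hB1' : (1 : ℂ) - zB ≠ 0 := sub_ne_zero.mpr (fun h => hB1 h.symm)
  field_simp at h1 h3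
  -- h1 : zF = (1 - zA) * zB * zG,  h3 : (1 - zA)^2 * zB^2 = zA * (1 - zB)
  have hFG : zF = zG := by linear_combination h1 + zG * h4
  have hFsq : (zF - 1) * (zF + 1) = 0 := by linear_combination h2 + zF * hFG
  have hFm1 : zF = -1 := by
    rcases mul_eq_zero.mp hFsq with h | h
    · exact absurd (sub_eq_zero.mp h) hF1
    · exact eq_neg_of_add_eq_zero_left h
  have hGm1 : zG = -1 := hFG ▸ hFm1
  have h5 : zA * (1 - zB) = 1 := by
    linear_combination -h3 + (zB * (1 - zA) + 1) * h4
  have hAB : zA = zB := by linear_combination h5 - h4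
  have hquad : zA ^ 2 - zA + 1 = 0 := by
    linear_combination -h4 - (1 - zA) * hAB
  have hsq3 : (I * (Real.sqrt 3 : ℝ)) ^ 2 = -3 := by
    have h3' : ((Real.sqrt 3 : ℝ) : ℂ) ^ 2 = 3 := by
      rw [← Complex.ofReal_pow, Real.sq_sqrt (by norm_num : (3:ℝ) ≥ 0)]
      norm_num
    rw [mul_pow, I_sq, h3']
    ring
  have hfac : (zA - (1 + I * Real.sqrt 3)/2) * (zA - (1 - I * Real.sqrt 3)/2)
      = zA ^ 2 - zA + 1 := by linear_combination (-1/4 : ℂ) * hsq3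
  have hroots : zA = (1 + I * Real.sqrt 3)/2 ∨ zA = (1 - I * Real.sqrt 3)/2 := by
    rcases mul_eq_zero.mp (hfac.trans hquad) with h | h
    · exact Or.inl (sub_eq_zero.mp h)
    · exact Or.inr (sub_eq_zero.mp h)
  exact ⟨hFm1, hGm1, hAB, hquad, hroots⟩
end
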